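/- arXiv:1809.09906 — 2 statements merged into one kernel-verified Lean document; each statement's English description precedes it below -/
import Mathlib

section
/- Let K be a field of characteristic p > 0, let a ∈ K with a not in {x^p − x | x ∈ K}, let L = K[X]/(X^p − X − a), θ the class of X, and θ_k = 1/(θ − k) for k ∈ Z/pZ, so that Θ = (θ_k)_k is a normal basis of L/K. Let ī ∈ K^{Z/pZ} be the coordinate vector of θ_0^2 in Θ. Fix R ∈ K not in F_p and set u_R = ((R + k)^{−1})_{k ∈ Z/pZ} and w_R = ((R + k)^{−2})_{k ∈ Z/pZ}; let u_R^{−1} denote the inverse of u_R for the convolution product. Then for all vectors α, β ∈ K^{Z/pZ}, the coordinate vector in Θ of the product (Σ_i α_i θ_i) · (Σ_j β_j θ_j) equals ī ⋆ (α ⋄ β) + u_R^{−1} ⋆ ( (u_R ⋆ α) ⋄ (u_R ⋆ β) − w_R ⋆ (α ⋄ β) ). -/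
/-!
Write `x` for `θ`, so that the basis vectors are the simple fractions `(x - k)⁻¹`. For `i ≠ j`,
`(x - i)⁻¹ (x - j)⁻¹ = (j - i)⁻¹ ((x - j)⁻¹ - (x - i)⁻¹)`, hence
`(Σ αᵢ (x - i)⁻¹) (Σ βⱼ (x - j)⁻¹) = Σ αᵢ βᵢ (x - i)⁻² + Σ γₘ (x - m)⁻¹`
with coefficients `γ` that do not depend on `x`. In `L`, the diagonal part has coordinates
`ī ⋆ (α ⋄ β)` because `θᵢ²` is the image of `θ₀²` under the automorphism `θ ↦ θ + i`.
Specialising the same identity to `x = R + k` in `K` gives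
`(u_R ⋆ α) ⋄ (u_R ⋆ β) = w_R ⋆ (α ⋄ β) + u_R ⋆ γ`, and convolving with `u_R⁻¹` recovers `γ`.
The polynomial `X ^ p - X - a` is irreducible: the roots of the minimal polynomial of a root
`θ` are of the form `θ + k`, so if its degree `d` were less than `p`, their sum `d θ + (element
of K)` would put `θ` in `K`.
-/

open Polynomial

/-- The convolution product of two vectors indexed by `Z/nZ`. -/
noncomputable def conv {K : Type*} [CommRing K] {n : ℕ} [NeZero n]
    (α β : ZMod n → K) : ZMod n → K :=
  fun k => ∑ i : ZMod n, α i * β (k - i)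

section Convolution

variable {K : Type*} [CommRing K] {n : ℕ} [NeZero n]

theorem conv_comm (α β : ZMod n → K) : conv α β = conv β α := by
  funext k
  exact Fintype.sum_equiv (Equiv.subLeft k) _ _
    (fun i => by simp only [Equiv.subLeft_apply, sub_sub_cancel]; ring)

theorem conv_assoc (α β γ : ZMod n → K) : conv (conv α β) γ = conv α (conv β γ) := by
  funext k
  simp only [conv, Finset.sum_mul, Finset.mul_sum]
  rw [Finset.sum_comm]
  refine Finset.sum_congr rfl fun i _ => ?_
  exact Fintype.sum_equiv (Equiv.subRight i) _ _
    (fun j => by simp only [Equiv.subRight_apply, sub_sub]; ring_nf)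

theorem conv_cancel_left {u v : ZMod n → K} (huv : conv u v = fun k => if k = 0 then 1 else 0)
    (γ : ZMod n → K) : conv v (conv u γ) = γ := by
  rw [← conv_assoc, conv_comm v, huv]
  funext k
  simp [conv]

end Convolution

section PartialFractions

variable {E F : Type*} [Field E] [Field F] {ι : Type*}

-- The summand `i = m` vanishes because `(c m - c m)⁻¹ = 0`.
def partialFractionCoeff [Fintype ι] (c α β : ι → E) (m : ι) : E :=
  ∑ i, (α i * β m + α m * β i) * (c m - c i)⁻¹

theorem map_partialFractionCoeff [Fintype ι] (f : E →+* F) (c α β : ι → E) (m : ι) :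
    f (partialFractionCoeff c α β m) = partialFractionCoeff (f ∘ c) (f ∘ α) (f ∘ β) m := by
  simp [partialFractionCoeff, map_sum, map_inv₀]

variable [DecidableEq ι] {c : ι → E} {x : E}

theorem inv_sub_mul_inv_sub (hc : Function.Injective c) (hx : ∀ i, x ≠ c i) (i j : ι) :
    (x - c i)⁻¹ * (x - c j)⁻¹ =
      (if i = j then ((x - c i)⁻¹) ^ 2 else 0) + (c j - c i)⁻¹ * ((x - c j)⁻¹ - (x - c i)⁻¹) := by
  split_ifs with h
  · subst h; simp [sq]
  · have := sub_ne_zero.2 (hx i)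
    have := sub_ne_zero.2 (hx j)
    have := sub_ne_zero.2 (hc.ne (Ne.symm h))
    field_simp
    ring

theorem sum_inv_sub_mul_sum_inv_sub [Fintype ι] (hc : Function.Injective c) (hx : ∀ i, x ≠ c i)
    (α β : ι → E) :
    (∑ i, α i * (x - c i)⁻¹) * (∑ j, β j * (x - c j)⁻¹) =
      ∑ i, α i * β i * ((x - c i)⁻¹) ^ 2 + ∑ m, partialFractionCoeff c α β m * (x - c m)⁻¹ := by
  simp_rw [Finset.sum_mul_sum, mul_mul_mul_comm, inv_sub_mul_inv_sub hc hx, mul_add,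
    Finset.sum_add_distrib]
  congr 1
  · simp [mul_ite]
  · simp only [partialFractionCoeff, mul_sub, add_mul, Finset.sum_mul, Finset.sum_sub_distrib,
      Finset.sum_add_distrib]
    rw [Finset.sum_comm (f := fun i j => α i * β j * ((c j - c i)⁻¹ * (x - c j)⁻¹)),
      sub_eq_add_neg, ← Finset.sum_neg_distrib]
    congr 1
    · simp only [mul_assoc]
    · refine Finset.sum_congr rfl fun m _ => ?_
      rw [← Finset.sum_neg_distrib]
      refine Finset.sum_congr rfl fun i _ => ?_
      rw [← neg_sub (c m), inv_neg]
      ring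

end PartialFractions

section XPowSubXSubC

variable {R : Type*} [Ring R] [Nontrivial R] {n : ℕ}

theorem monic_X_pow_sub_X_sub_C (hn : 1 < n) (a : R) : (X ^ n - X - C a : R[X]).Monic := by
  rw [sub_sub]
  exact monic_X_pow_sub (by rw [degree_X_add_C]; exact_mod_cast hn)

theorem natDegree_X_pow_sub_X_sub_C (hn : 1 < n) (a : R) :
    (X ^ n - X - C a : R[X]).natDegree = n := by
  rw [sub_sub, natDegree_sub_eq_left_of_natDegree_lt] <;> simp [hn]

end XPowSubXSubC

theorem natCast_natDegree_mul_mem_range {K F : Type*} [Field K] [Field F] (φ : K →+* F)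
    {g : K[X]} (hg : g.Monic) (hs : (g.map φ).Splits) {θ : F}
    (hroots : ∀ z ∈ (g.map φ).roots, z - θ ∈ φ.range) : (g.natDegree : F) * θ ∈ φ.range := by
  have hsum : (g.map φ).roots.sum ∈ φ.range := by
    rw [← neg_neg (Multiset.sum _), ← hs.nextCoeff_eq_neg_sum_roots_of_monic (hg.map φ),
      nextCoeff_map φ.injective]
    exact ⟨-g.nextCoeff, map_neg φ _⟩
  have hshift : ((g.map φ).roots.map (· - θ)).sum ∈ φ.range :=
    multiset_sum_mem _ fun y hy => by
      obtain ⟨z, hz, rfl⟩ := Multiset.mem_map.1 hy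
      exact hroots z hz
  have hcard : Multiset.card (g.map φ).roots = g.natDegree := by
    rw [← hs.natDegree_eq_card_roots, natDegree_map]
  convert sub_mem hsum hshift using 1
  rw [Multiset.sum_map_sub, Multiset.map_const', Multiset.sum_replicate, hcard, nsmul_eq_mul,
    Multiset.map_id', sub_sub_cancel]

section ArtinSchreier

variable {K : Type*} [Field K] {p : ℕ} [Fact p.Prime] [CharP K p] {a : K}

local notation "𝔽" => ZMod.castHom (dvd_refl p) K

theorem exists_castHom_eq_sub_of_pow_sub_self_eq {z y : K} (h : z ^ p - z = y ^ p - y) :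
    ∃ n : ZMod p, 𝔽 n = z - y := by
  have hpow : (z - y) ^ p = z - y := by rw [sub_pow_char]; linear_combination h
  rw [← Subfield.mem_bot_iff_pow_eq_self K p, ← ZMod.fieldRange_castHom_eq_bot p] at hpow
  exact RingHom.mem_fieldRange.1 hpow

theorem natDegree_minpoly_eq_of_aeval_X_pow_sub_X_sub_C {F : Type*} [Field F] [IsAlgClosed F]
    [Algebra K F] (ha : ¬ ∃ x : K, x ^ p - x = a) {θ : F}
    (hθ : aeval θ (X ^ p - X - C a) = 0) : (minpoly K θ).natDegree = p := by
  have : CharP F p := charP_of_injective_algebraMap (algebraMap K F).injective p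
  have hf := monic_X_pow_sub_X_sub_C (Fact.out : p.Prime).one_lt a
  have hθint : IsIntegral K θ := ⟨_, hf, hθ⟩
  have hgf : minpoly K θ ∣ X ^ p - X - C a := minpoly.dvd K θ hθ
  have hroots : ∀ z ∈ ((minpoly K θ).map (algebraMap K F)).roots, z - θ ∈ (algebraMap K F).range :=
    fun z hz => by
      rw [mem_roots ((minpoly.monic hθint).map _).ne_zero, IsRoot, eval_map, ← aeval_def] at hz
      have hz := aeval_eq_zero_of_dvd_aeval_eq_zero hgf hz
      simp only [map_sub, map_pow, aeval_X, aeval_C] at hθ hz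
      obtain ⟨n, hn⟩ := exists_castHom_eq_sub_of_pow_sub_self_eq
        (by linear_combination hz - hθ : z ^ p - z = θ ^ p - θ)
      exact ⟨𝔽 n, (RingHom.congr_fun (RingHom.ext_zmod ((algebraMap K F).comp 𝔽) _) n).trans hn⟩
  obtain ⟨t, ht⟩ := natCast_natDegree_mul_mem_range _ (minpoly.monic hθint) (IsAlgClosed.splits _)
    hroots
  set d := (minpoly K θ).natDegree
  have hdp : d ≤ p := (natDegree_le_of_dvd hgf hf.ne_zero).trans_eq
    (natDegree_X_pow_sub_X_sub_C (Fact.out : p.Prime).one_lt a)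
  refine hdp.antisymm (not_lt.1 fun hlt => ha ⟨t / d, (algebraMap K F).injective ?_⟩)
  have hd : (d : K) ≠ 0 := by
    rw [Ne, CharP.cast_eq_zero_iff K p]
    exact Nat.not_dvd_of_pos_of_lt (minpoly.natDegree_pos hθint) hlt
  have hθt : θ = algebraMap K F (t / d) := by
    rw [map_div₀, ht, ← map_natCast (algebraMap K F),
      mul_div_cancel_left₀ _ ((_root_.map_ne_zero _).2 hd)]
  rw [hθt] at hθ
  simp only [map_sub, map_pow, aeval_X, aeval_C] at hθ ⊢
  linear_combination hθ

theorem irreducible_X_pow_sub_X_sub_C (ha : ¬ ∃ x : K, x ^ p - x = a) :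
    Irreducible (X ^ p - X - C a : K[X]) := by
  have hf := monic_X_pow_sub_X_sub_C (Fact.out : p.Prime).one_lt a
  have hfdeg := natDegree_X_pow_sub_X_sub_C (Fact.out : p.Prime).one_lt a
  obtain ⟨θ, hθ⟩ := IsAlgClosed.exists_aeval_eq_zero (AlgebraicClosure K) _
    (by rw [degree_eq_natDegree hf.ne_zero, hfdeg]; exact_mod_cast (Fact.out : p.Prime).ne_zero)
  have hθint : IsIntegral K θ := ⟨_, hf, hθ⟩
  rw [eq_of_monic_of_dvd_of_natDegree_le (minpoly.monic hθint) hf (minpoly.dvd K θ hθ)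
    (by rw [hfdeg, natDegree_minpoly_eq_of_aeval_X_pow_sub_X_sub_C ha hθ])]
  exact minpoly.irreducible hθint

theorem aeval_add_castHom {A : Type*} [CommRing A] [Algebra K A] [CharP A p] {x : A}
    (hx : aeval x (X ^ p - X - C a) = 0) (c : ZMod p) :
    aeval (x + algebraMap K A (𝔽 c)) (X ^ p - X - C a) = 0 := by
  have hc : algebraMap K A (𝔽 c) ^ p = algebraMap K A (𝔽 c) := by
    rw [← map_pow, ← map_pow, ZMod.pow_card]
  simp only [map_sub, map_pow, aeval_X, aeval_C] at hx ⊢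
  rw [add_pow_char, hc]
  linear_combination hx

theorem conv_inv_add_mul_conv_inv_add (R : K) (hR : R ∉ Set.range (Nat.cast : ℕ → K))
    (α β : ZMod p → K) :
    conv (fun k => (R + 𝔽 k)⁻¹) α * conv (fun k => (R + 𝔽 k)⁻¹) β =
      conv (fun k => (R + 𝔽 k)⁻¹ ^ 2) (α * β) +
        conv (fun k => (R + 𝔽 k)⁻¹) (partialFractionCoeff 𝔽 α β) := by
  funext k
  have hx : ∀ i, R + 𝔽 k ≠ 𝔽 i := fun i h =>
    hR ⟨(i - k).val, by
      rw [ZMod.natCast_val, ← ZMod.castHom_apply (h := dvd_refl p), map_sub, ← h,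
        add_sub_cancel_right]⟩
  have hshift : ∀ i, R + 𝔽 (k - i) = R + 𝔽 k - 𝔽 i := fun i => by rw [map_sub, add_sub_assoc]
  simp only [Pi.mul_apply, Pi.add_apply, conv_comm _ (partialFractionCoeff _ _ _), conv_comm _ α,
    conv_comm _ β, conv_comm _ (α * β), conv, hshift]
  exact sum_inv_sub_mul_sum_inv_sub (𝔽).injective hx α β

variable [Fact (Irreducible (X ^ p - X - C a : K[X]))]

local notation "L" => AdjoinRoot (X ^ p - X - C a : K[X])
local notation "θ" => AdjoinRoot.root (X ^ p - X - C a : K[X])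

instance : CharP L p := charP_of_injective_algebraMap (algebraMap K L).injective p

noncomputable def shiftAlgHom (c : ZMod p) : L →ₐ[K] L :=
  AdjoinRoot.liftAlgHom _ (Algebra.ofId K L) (θ + algebraMap K L (𝔽 c)) <| by
    rw [Algebra.toRingHom_ofId, ← aeval_def]
    exact aeval_add_castHom (by rw [AdjoinRoot.aeval_eq, AdjoinRoot.mk_self]) c

theorem shiftAlgHom_inv_root_sub (c m : ZMod p) :
    shiftAlgHom c (θ - algebraMap K L (𝔽 m))⁻¹ = (θ - algebraMap K L (𝔽 (m - c)))⁻¹ := by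
  rw [map_inv₀, map_sub, shiftAlgHom, AdjoinRoot.liftAlgHom_root, AlgHom.commutes, map_sub,
    map_sub]
  ring_nf

variable {B : Module.Basis (ZMod p) K (AdjoinRoot (X ^ p - X - C a : K[X]))}
  (hB : ∀ k, B k = (AdjoinRoot.root (X ^ p - X - C a : K[X]) -
    algebraMap K (AdjoinRoot (X ^ p - X - C a : K[X])) (ZMod.castHom (dvd_refl p) K k))⁻¹)
include hB

theorem repr_shiftAlgHom (c : ZMod p) (y : L) (k : ZMod p) :
    B.repr (shiftAlgHom c y) k = B.repr y (k + c) := by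
  have hy : shiftAlgHom c y = ∑ n, B.repr y (n + c) • B n := by
    conv_lhs => rw [← B.sum_repr y]
    simp_rw [map_sum, map_smul, hB, shiftAlgHom_inv_root_sub, ← hB]
    exact Fintype.sum_equiv (Equiv.subRight c) _ _ fun n => by simp
  rw [hy, B.repr_sum_self]

theorem repr_basis_sq (i k : ZMod p) : B.repr (B i ^ 2) k = B.repr (B 0 ^ 2) (k - i) := by
  rw [sub_eq_add_neg k, ← repr_shiftAlgHom hB, hB, hB]
  simp only [map_pow, shiftAlgHom_inv_root_sub, zero_sub, neg_neg]

theorem repr_sum_smul_mul_sum_smul (α β : ZMod p → K) (k : ZMod p) :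
    B.repr ((∑ i, α i • B i) * (∑ j, β j • B j)) k =
      conv (B.repr (B 0 ^ 2)) (α * β) k + partialFractionCoeff 𝔽 α β k := by
  have hc : Function.Injective (algebraMap K L ∘ 𝔽) :=
    (algebraMap K L).injective.comp (𝔽).injective
  have hx : ∀ i, θ ≠ algebraMap K L (𝔽 i) := fun i h =>
    B.ne_zero i (by rw [hB, h, sub_self, inv_zero])
  have key : (∑ i, α i • B i) * (∑ j, β j • B j) =
      ∑ i, (α i * β i) • B i ^ 2 + ∑ m, partialFractionCoeff 𝔽 α β m • B m := by
    simp only [hB, Algebra.smul_def, map_mul, map_partialFractionCoeff]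
    exact sum_inv_sub_mul_sum_inv_sub hc hx (algebraMap K L ∘ α) (algebraMap K L ∘ β)
  rw [key, map_add, Finsupp.add_apply, B.repr_sum_self, map_sum, Finsupp.finsetSum_apply,
    conv_comm]
  congr 1
  refine Finset.sum_congr rfl fun i _ => ?_
  rw [map_smul, Finsupp.smul_apply, smul_eq_mul, repr_basis_sq hB, Pi.mul_apply]

end ArtinSchreier

/-- FFT-like multiplication formula in the Artin–Schreier normal basis
`θ_k = 1/(θ - k)`: the coordinate vector of `(Σ α_i θ_i)(Σ β_j θ_j)` equals
`ī ⋆ (α ⋄ β) + u_R⁻¹ ⋆ ((u_R ⋆ α) ⋄ (u_R ⋆ β) - w_R ⋆ (α ⋄ β))`. -/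
theorem stmt_4 (K : Type*) [Field K] (p : ℕ) [Fact p.Prime] [CharP K p]
    (a : K) (ha : ¬ ∃ x : K, x ^ p - x = a)
    (R : K) (hR : R ∉ Set.range (Nat.cast : ℕ → K)) :
    ∃ hirr : Irreducible (X ^ p - X - C a : K[X]),
      letI : Fact (Irreducible (X ^ p - X - C a : K[X])) := ⟨hirr⟩
      ∀ Θ : ZMod p → AdjoinRoot (X ^ p - X - C a : K[X]),
        (∀ k : ZMod p, Θ k =
          (AdjoinRoot.root (X ^ p - X - C a : K[X]) -
            algebraMap K (AdjoinRoot (X ^ p - X - C a : K[X]))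
              (ZMod.castHom (dvd_refl p) K k))⁻¹) →
        ∀ B : Module.Basis (ZMod p) K (AdjoinRoot (X ^ p - X - C a : K[X])),
          (∀ k : ZMod p, B k = Θ k) →
          ∀ ii : ZMod p → K, (∀ k : ZMod p, ii k = B.repr (Θ 0 ^ 2) k) →
          ∀ uR wR : ZMod p → K,
            (∀ k : ZMod p, uR k = (R + ZMod.castHom (dvd_refl p) K k)⁻¹) →
            (∀ k : ZMod p, wR k = (R + ZMod.castHom (dvd_refl p) K k)⁻¹ ^ 2) →
            ∀ uRinv : ZMod p → K,
              conv uR uRinv = (fun k => if k = 0 then 1 else 0) →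
              ∀ α β : ZMod p → K, ∀ k : ZMod p,
                B.repr ((∑ i : ZMod p, α i • Θ i) * (∑ j : ZMod p, β j • Θ j)) k =
                  conv ii (α * β) k +
                    conv uRinv
                      (conv uR α * conv uR β - conv wR (α * β)) k := by
  have hirr := irreducible_X_pow_sub_X_sub_C ha
  refine ⟨hirr, ?_⟩
  have : Fact (Irreducible (X ^ p - X - C a : K[X])) := ⟨hirr⟩
  intro Θ hΘ B hB ii hii uR wR hu hw uRinv huRinv α β k
  obtain rfl : ⇑B = Θ := funext hB
  obtain rfl : ii = B.repr (B 0 ^ 2) := funext hii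
  obtain rfl := funext hu
  obtain rfl := funext hw
  rw [repr_sum_smul_mul_sum_smul hΘ, conv_inv_add_mul_conv_inv_add R hR, add_sub_cancel_left,
    conv_cancel_left huRinv]
end

section
/- Let F_q be a finite field of odd characteristic, α ∈ F_q a nonsquare, n a divisor of q + 1 with 1 < n < q + 1, a a generator of T_α(F_q), and b a point of T_α over the algebraic closure of F_q with [n]b = a. Let Φ denote the q-power Frobenius acting coordinate-wise on points. Then t := Φ(b) ⊖ b is an F_q-rational point of T_α of exact order n (so t generates the n-torsion subgroup T_α[n] of T_α(F_q)), and the fiber of the multiplication-by-n map above a is exactly the set {b ⊕ kt : 0 ≤ k ≤ n − 1}. -/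
/-- The group law of the Lucas torus `x² - αy² = 1`. -/
def tmul {F : Type*} [Field F] (α : F) (P Q : F × F) : F × F :=
  (P.1 * Q.1 + α * P.2 * Q.2, P.1 * Q.2 + Q.1 * P.2)

/-- `k`-fold sum of a point of the Lucas torus with itself ("multiplication by `k`"). -/
def tpow {F : Type*} [Field F] (α : F) (k : ℕ) (P : F × F) : F × F :=
  (tmul α P)^[k] (1, 0)

/-- Difference `P ⊖ Q` in the Lucas torus group law (the inverse of `(x,y)` is `(x,-y)`). -/
def tsub {F : Type*} [Field F] (α : F) (P Q : F × F) : F × F :=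
  tmul α P (Q.1, -Q.2)

private lemma tpow_succ' {F : Type*} [Field F] (α : F) (k : ℕ) (P : F × F) :
    tpow α (k + 1) P = tmul α P (tpow α k P) :=
  Function.iterate_succ_apply' _ _ _

private lemma phi_tmul {F : Type*} [Field F] (s : F) (P Q : F × F) :
    (tmul (s ^ 2) P Q).1 + s * (tmul (s ^ 2) P Q).2
      = (P.1 + s * P.2) * (Q.1 + s * Q.2) := by
  simp only [tmul]; ring

private lemma psi_tmul {F : Type*} [Field F] (s : F) (P Q : F × F) :
    (tmul (s ^ 2) P Q).1 - s * (tmul (s ^ 2) P Q).2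
      = (P.1 - s * P.2) * (Q.1 - s * Q.2) := by
  simp only [tmul]; ring

private lemma phi_tpow {F : Type*} [Field F] (s : F) (k : ℕ) (P : F × F) :
    (tpow (s ^ 2) k P).1 + s * (tpow (s ^ 2) k P).2 = (P.1 + s * P.2) ^ k := by
  induction k with
  | zero => simp [tpow]
  | succ k ih => rw [tpow_succ', phi_tmul, ih, pow_succ]; ring

private lemma psi_tpow {F : Type*} [Field F] (s : F) (k : ℕ) (P : F × F) :
    (tpow (s ^ 2) k P).1 - s * (tpow (s ^ 2) k P).2 = (P.1 - s * P.2) ^ k := by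
  induction k with
  | zero => simp [tpow]
  | succ k ih => rw [tpow_succ', psi_tmul, ih, pow_succ]; ring

private lemma point_ext {F : Type*} [Field F] {s : F} (hs : s ≠ 0) (h2 : (2 : F) ≠ 0)
    {P Q : F × F} (h : P.1 + s * P.2 = Q.1 + s * Q.2) (h' : P.1 - s * P.2 = Q.1 - s * Q.2) :
    P = Q := by
  have e1 : P.1 = Q.1 := by
    have h3 : 2 * P.1 = 2 * Q.1 := by linear_combination h + h'
    exact mul_left_cancel₀ h2 h3
  have e2 : P.2 = Q.2 := by
    have h3 : (2 * s) * P.2 = (2 * s) * Q.2 := by linear_combination h - h'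
    exact mul_left_cancel₀ (mul_ne_zero h2 hs) h3
  exact Prod.ext e1 e2

open Polynomial in
private lemma exists_rat {K Ω : Type*} [Field K] [Fintype K] [Field Ω] [Algebra K Ω]
    (x : Ω) (hx : x ^ Fintype.card K = x) : ∃ y : K, algebraMap K Ω y = x := by
  classical
  by_contra hc
  push_neg at hc
  have hq1 : 1 < Fintype.card K := Fintype.one_lt_card
  have hpne : (X ^ Fintype.card K - X : Polynomial Ω) ≠ 0 :=
    FiniteField.X_pow_card_sub_X_ne_zero Ω hq1
  have hdeg : (X ^ Fintype.card K - X : Polynomial Ω).natDegree = Fintype.card K :=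
    FiniteField.X_pow_card_sub_X_natDegree_eq Ω hq1
  have hroot : ∀ z : Ω, z ^ Fintype.card K = z →
      z ∈ (X ^ Fintype.card K - X : Polynomial Ω).roots.toFinset := by
    intro z hz
    rw [Multiset.mem_toFinset, Polynomial.mem_roots hpne]
    simp [Polynomial.IsRoot, hz]
  set S : Finset Ω := insert x ((Finset.univ : Finset K).image (algebraMap K Ω)) with hS
  have hsub : S ⊆ (X ^ Fintype.card K - X : Polynomial Ω).roots.toFinset := by
    intro z hz
    rw [hS, Finset.mem_insert] at hz
    rcases hz with rfl | hz
    · exact hroot _ hx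
    · obtain ⟨y, _, rfl⟩ := Finset.mem_image.mp hz
      exact hroot _ (by rw [← map_pow, FiniteField.pow_card])
  have hcard : S.card = Fintype.card K + 1 := by
    rw [hS, Finset.card_insert_of_notMem, Finset.card_image_of_injective _
      (algebraMap K Ω).injective, Finset.card_univ]
    intro hmem
    obtain ⟨y, _, hy⟩ := Finset.mem_image.mp hmem
    exact hc y hy
  have h1 := Finset.card_le_card hsub
  have h2 := Multiset.toFinset_card_le (X ^ Fintype.card K - X : Polynomial Ω).roots
  have h3 := Polynomial.card_roots' (X ^ Fintype.card K - X : Polynomial Ω)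
  rw [hdeg] at h3
  omega

private lemma map_tpow {K Ω : Type*} [Field K] [Field Ω] (f : K →+* Ω) (α : K) (k : ℕ)
    (P : K × K) :
    tpow (f α) k (f P.1, f P.2) = (f (tpow α k P).1, f (tpow α k P).2) := by
  induction k with
  | zero => simp [tpow]
  | succ k ih =>
      rw [tpow_succ', tpow_succ', ih]
      simp only [tmul, map_add, map_mul]

/-- With `a` a generator of `T_α(F_q)`, `n` a nontrivial divisor of `q + 1` and `b` a
point over the algebraic closure with `[n]b = a`, the point `t = Φ(b) ⊖ b` (with `Φ` the
`q`-power Frobenius acting coordinatewise) is an `F_q`-rational point of exact order `n`,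
and the fiber of multiplication by `n` above `a` is `{b ⊕ kt : 0 ≤ k ≤ n - 1}`. -/
theorem stmt_12 (K : Type*) [Field K] [Fintype K] (hchar : ringChar K ≠ 2)
    (α : K) (hα : ¬ IsSquare α)
    (n : ℕ) (hn1 : 1 < n) (hn2 : n < Fintype.card K + 1)
    (hdvd : n ∣ Fintype.card K + 1)
    (a : K × K) (ha : a.1 ^ 2 - α * a.2 ^ 2 = 1)
    (hgen : ∀ P : K × K, P.1 ^ 2 - α * P.2 ^ 2 = 1 → ∃ k : ℕ, P = tpow α k a)
    (Ω : Type*) [Field Ω] [Algebra K Ω] [IsAlgClosure K Ω]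
    (b : Ω × Ω) (hb : b.1 ^ 2 - algebraMap K Ω α * b.2 ^ 2 = 1)
    (hnb : tpow (algebraMap K Ω α) n b = (algebraMap K Ω a.1, algebraMap K Ω a.2))
    (t : Ω × Ω)
    (ht : t = tsub (algebraMap K Ω α)
      (b.1 ^ Fintype.card K, b.2 ^ Fintype.card K) b) :
    (∃ t₀ : K × K, t₀.1 ^ 2 - α * t₀.2 ^ 2 = 1 ∧
        (algebraMap K Ω t₀.1, algebraMap K Ω t₀.2) = t) ∧
    (tpow (algebraMap K Ω α) n t = (1, 0) ∧
      ∀ m : ℕ, 0 < m → m < n → tpow (algebraMap K Ω α) m t ≠ (1, 0)) ∧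
    ∀ P : Ω × Ω,
      (P.1 ^ 2 - algebraMap K Ω α * P.2 ^ 2 = 1 ∧
          tpow (algebraMap K Ω α) n P = (algebraMap K Ω a.1, algebraMap K Ω a.2)) ↔
        ∃ k : ℕ, k < n ∧ P = tmul (algebraMap K Ω α) b (tpow (algebraMap K Ω α) k t) := by
  classical
  set q := Fintype.card K with hqdef
  have hq1 : 1 < q := Fintype.one_lt_card
  set p := ringChar K with hpdef
  haveI : CharP K p := ringChar.charP K
  obtain ⟨r, hpprime, hqp⟩ := FiniteField.card K p
  rw [← hqdef] at hqp
  haveI : Fact p.Prime := ⟨hpprime⟩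
  haveI : CharP Ω p := charP_of_injective_algebraMap (algebraMap K Ω).injective p
  have hqodd : Odd q := by rw [hqp]; exact (hpprime.odd_of_ne_two hchar).pow
  -- Frobenius facts
  have frob_add : ∀ x y : Ω, (x + y) ^ q = x ^ q + y ^ q := by
    intro x y; rw [hqp]; exact add_pow_char_pow (R := Ω) (p := p) (n := ↑r) (x := x) (y := y)
  have frob_map : ∀ y : K, (algebraMap K Ω y) ^ q = algebraMap K Ω y := fun y => by
    rw [← map_pow, FiniteField.pow_card]
  have two_ne : (2 : Ω) ≠ 0 := by
    have h2K : (2 : K) ≠ 0 := Ring.two_ne_zero hchar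
    intro h
    apply h2K
    apply (algebraMap K Ω).injective
    rw [map_ofNat, h, map_zero]
  have frob_two : (2 : Ω) ^ q = 2 := by
    have := frob_map (2 : K); rwa [map_ofNat] at this
  have hα0 : α ≠ 0 := fun h => hα ⟨0, by rw [h, mul_zero]⟩
  haveI : IsAlgClosed Ω := IsAlgClosure.isAlgClosed K
  obtain ⟨s, hs⟩ := IsAlgClosed.exists_pow_nat_eq (algebraMap K Ω α) (n := 2) (by norm_num)
  have hs0 : s ≠ 0 := by
    intro h
    apply hα0
    apply (algebraMap K Ω).injective
    rw [map_zero, ← hs, h]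
    ring
  rw [← hs] at hb hnb ht ⊢
  -- s^q = -s
  have hsq : s ^ q = -s := by
    have h2 : (s ^ q) ^ 2 = s ^ 2 := by
      calc (s ^ q) ^ 2 = (s ^ 2) ^ q := by rw [← pow_mul, ← pow_mul, mul_comm]
        _ = s ^ 2 := by rw [hs]; exact frob_map α
    have h1 : (s ^ q - s) * (s ^ q + s) = 0 := by linear_combination h2
    rcases mul_eq_zero.mp h1 with h | h
    · exfalso
      obtain ⟨y, hy⟩ := exists_rat s (by linear_combination h)
      refine hα ⟨y, (algebraMap K Ω).injective ?_⟩
      rw [map_mul, hy, ← hs]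
      ring
    · linear_combination h
  have frobφ : ∀ P : Ω × Ω, (P.1 + s * P.2) ^ q = P.1 ^ q - s * P.2 ^ q := fun P => by
    rw [frob_add, mul_pow, hsq]; ring
  have frobψ : ∀ P : Ω × Ω, (P.1 - s * P.2) ^ q = P.1 ^ q + s * P.2 ^ q := fun P => by
    rw [sub_eq_add_neg, frob_add, Odd.neg_pow hqodd, mul_pow, hsq]; ring
  -- basic quantities
  have hBC : (b.1 + s * b.2) * (b.1 - s * b.2) = 1 := by linear_combination hb
  have hB0 : b.1 + s * b.2 ≠ 0 := left_ne_zero_of_mul_eq_one hBC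
  have hC0 : b.1 - s * b.2 ≠ 0 := right_ne_zero_of_mul_eq_one hBC
  have hCB1 : (b.1 - s * b.2) ^ (q + 1) * (b.1 + s * b.2) ^ (q + 1) = 1 := by
    rw [← mul_pow, show (b.1 - s * b.2) * (b.1 + s * b.2) = 1 from by linear_combination hBC,
      one_pow]
  have hBn : (b.1 + s * b.2) ^ n = algebraMap K Ω a.1 + s * algebraMap K Ω a.2 := by
    rw [← phi_tpow s n b, hnb]
  have hCn : (b.1 - s * b.2) ^ n = algebraMap K Ω a.1 - s * algebraMap K Ω a.2 := by
    rw [← psi_tpow s n b, hnb]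
  have haΩ : (algebraMap K Ω a.1 + s * algebraMap K Ω a.2)
      * (algebraMap K Ω a.1 - s * algebraMap K Ω a.2) = 1 := by
    have h1 : algebraMap K Ω (a.1 ^ 2 - α * a.2 ^ 2) = algebraMap K Ω 1 := congrArg _ ha
    rw [map_one, map_sub, map_mul, map_pow, map_pow, ← hs] at h1
    linear_combination h1
  have hAq : (algebraMap K Ω a.1 + s * algebraMap K Ω a.2) ^ q
      = algebraMap K Ω a.1 - s * algebraMap K Ω a.2 := by
    rw [frob_add, mul_pow, hsq, frob_map, frob_map]
    ring
  have hA1 : (algebraMap K Ω a.1 + s * algebraMap K Ω a.2) ^ (q + 1) = 1 := by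
    rw [pow_succ, hAq]
    linear_combination haΩ
  -- a primitive (q+1)-st root of unity
  have hq10 : ((q + 1 : ℕ) : Ω) ≠ 0 := by
    rw [Ne, CharP.cast_eq_zero_iff Ω p]
    intro hdvd'
    have hpq : p ∣ q := by rw [hqp]; exact dvd_pow_self p r.pos.ne'
    have hone : q + 1 - q = 1 := by omega
    have h1 : p ∣ 1 := hone ▸ Nat.dvd_sub hdvd' hpq
    rw [Nat.dvd_one] at h1
    exact hpprime.one_lt.ne' h1
  haveI : NeZero ((q + 1 : ℕ) : Ω) := ⟨hq10⟩
  obtain ⟨ζ, hζ⟩ := HasEnoughRootsOfUnity.exists_primitiveRoot Ω (q + 1)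
  have hζ1 : ζ ^ (q + 1) = 1 := hζ.pow_eq_one
  have hζ0 : ζ ≠ 0 := fun h => by simp [h, zero_pow] at hζ1
  have hζmul : ζ * ζ ^ q = 1 := by rw [← pow_succ']; exact hζ1
  have hζq0 : ζ ^ q ≠ 0 := pow_ne_zero _ hζ0
  have hζqq : (ζ ^ q) ^ q = ζ := by
    have h1 : (ζ ^ q) ^ q * ζ ^ q = 1 := by
      rw [← pow_succ, ← pow_mul, mul_comm, pow_mul, hζ1, one_pow]
    exact mul_right_cancel₀ hζq0 (h1.trans hζmul.symm)
  -- build the rational point with φ-value ζ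
  have hx1 : ((ζ + ζ ^ q) / 2) ^ q = (ζ + ζ ^ q) / 2 := by
    rw [div_pow, frob_add, hζqq, frob_two, add_comm]
  have hx2 : ((ζ - ζ ^ q) / (2 * s)) ^ q = (ζ - ζ ^ q) / (2 * s) := by
    rw [div_pow]
    have hsub : (ζ - ζ ^ q) ^ q = ζ ^ q - ζ := by
      rw [sub_eq_add_neg, frob_add, Odd.neg_pow hqodd, hζqq]
      ring
    have h2s : (2 * s) ^ q = -(2 * s) := by
      rw [mul_pow, hsq, frob_two]
      ring
    rw [hsub, h2s, show ζ ^ q - ζ = -(ζ - ζ ^ q) from by ring, neg_div_neg_eq]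
  obtain ⟨y1, hy1⟩ := exists_rat _ hx1
  obtain ⟨y2, hy2⟩ := exists_rat _ hx2
  have hynorm : y1 ^ 2 - α * y2 ^ 2 = 1 := by
    apply (algebraMap K Ω).injective
    rw [map_sub, map_one, map_mul, map_pow, map_pow, hy1, hy2, ← hs]
    have expand : ((ζ + ζ ^ q) / 2) ^ 2 - s ^ 2 * ((ζ - ζ ^ q) / (2 * s)) ^ 2 = ζ * ζ ^ q := by
      field_simp
      ring
    rw [expand, hζmul]
  obtain ⟨k0, hk0⟩ := hgen (y1, y2) hynorm
  have hζA : ζ = (algebraMap K Ω a.1 + s * algebraMap K Ω a.2) ^ k0 := by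
    have h3 := map_tpow (algebraMap K Ω) α k0 a
    rw [← hk0] at h3
    rw [← hs] at h3
    have h4 := phi_tpow s k0 (algebraMap K Ω a.1, algebraMap K Ω a.2)
    rw [h3] at h4
    dsimp only at h4
    rw [hy1, hy2] at h4
    rw [← h4]
    field_simp
    ring
  -- the order of A is q + 1
  have hordζ : orderOf ζ = q + 1 := hζ.eq_orderOf.symm
  have hordA : orderOf (algebraMap K Ω a.1 + s * algebraMap K Ω a.2) = q + 1 := by
    have hd1 : orderOf (algebraMap K Ω a.1 + s * algebraMap K Ω a.2) ∣ q + 1 :=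
      orderOf_dvd_of_pow_eq_one hA1
    have hd2 : q + 1 ∣ orderOf (algebraMap K Ω a.1 + s * algebraMap K Ω a.2) := by
      calc q + 1 = orderOf ζ := hordζ.symm
        _ = orderOf ((algebraMap K Ω a.1 + s * algebraMap K Ω a.2) ^ k0) := by rw [← hζA]
        _ ∣ orderOf (algebraMap K Ω a.1 + s * algebraMap K Ω a.2) := orderOf_pow_dvd k0
    exact Nat.dvd_antisymm hd1 hd2
  -- the order of B is n * (q + 1)
  have hBord : orderOf (b.1 + s * b.2) = n * (q + 1) := by
    have h1 : orderOf ((b.1 + s * b.2) ^ n) = q + 1 := by rw [hBn]; exact hordA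
    rw [orderOf_pow' _ (show n ≠ 0 by omega)] at h1
    have hgcd_dvd : Nat.gcd (orderOf (b.1 + s * b.2)) n ∣ orderOf (b.1 + s * b.2) :=
      Nat.gcd_dvd_left _ _
    have hdeq : orderOf (b.1 + s * b.2) = (q + 1) * Nat.gcd (orderOf (b.1 + s * b.2)) n := by
      conv_lhs => rw [← Nat.div_mul_cancel hgcd_dvd]
      rw [h1]
    have hnd : n ∣ orderOf (b.1 + s * b.2) := hdvd.trans ⟨Nat.gcd (orderOf (b.1 + s * b.2)) n, hdeq⟩
    have hg : Nat.gcd (orderOf (b.1 + s * b.2)) n = n := Nat.gcd_eq_right hnd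
    rw [hg] at hdeq
    rw [hdeq]; ring
  have hBCj : ∀ j : ℕ, (b.1 - s * b.2) ^ j = 1 ↔ (b.1 + s * b.2) ^ j = 1 := by
    intro j
    have hprod : (b.1 + s * b.2) ^ j * (b.1 - s * b.2) ^ j = 1 := by
      rw [← mul_pow, hBC, one_pow]
    constructor <;> intro h <;> rw [h] at hprod <;> simpa using hprod
  have hTpow : ∀ m : ℕ, ((b.1 - s * b.2) ^ (q + 1)) ^ m = 1 ↔ n ∣ m := by
    intro m
    rw [← pow_mul, hBCj ((q + 1) * m), ← orderOf_dvd_iff_pow_eq_one, hBord]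
    constructor
    · rintro ⟨c, hc⟩
      refine ⟨c, Nat.eq_of_mul_eq_mul_left (show 0 < q + 1 by omega) ?_⟩
      calc (q + 1) * m = n * (q + 1) * c := hc
        _ = (q + 1) * (n * c) := by ring
    · rintro ⟨c, rfl⟩; exact ⟨c, by ring⟩
  have hTpow' : ∀ m : ℕ, ((b.1 + s * b.2) ^ (q + 1)) ^ m = 1 ↔ n ∣ m := fun m => by
    rw [← pow_mul, ← hBCj ((q + 1) * m), pow_mul]; exact hTpow m
  -- φ and ψ values of t
  have hφt : t.1 + s * t.2 = (b.1 - s * b.2) ^ (q + 1) := by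
    rw [ht]
    simp only [tsub]
    rw [phi_tmul]
    dsimp only
    rw [pow_succ, frobψ b]
    ring
  have hψt : t.1 - s * t.2 = (b.1 + s * b.2) ^ (q + 1) := by
    rw [ht]
    simp only [tsub]
    rw [psi_tmul]
    dsimp only
    rw [pow_succ, frobφ b]
    ring
  have hTprod : (t.1 + s * t.2) * (t.1 - s * t.2) = 1 := by
    rw [hφt, hψt]; exact hCB1
  have hTq1 : ((b.1 - s * b.2) ^ (q + 1)) ^ (q + 1) = 1 := (hTpow (q + 1)).mpr hdvd
  have hBq1 : ((b.1 + s * b.2) ^ (q + 1)) ^ (q + 1) = 1 := (hTpow' (q + 1)).mpr hdvd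
  have hTq : ((b.1 - s * b.2) ^ (q + 1)) ^ q = (b.1 + s * b.2) ^ (q + 1) := by
    have h1 : ((b.1 - s * b.2) ^ (q + 1)) ^ q * (b.1 - s * b.2) ^ (q + 1) = 1 := by
      rw [← pow_succ]; exact hTq1
    apply mul_right_cancel₀ (pow_ne_zero (q + 1) hC0)
    rw [h1]
    linear_combination -hCB1
  have hTq' : ((b.1 + s * b.2) ^ (q + 1)) ^ q = (b.1 - s * b.2) ^ (q + 1) := by
    have h1 : ((b.1 + s * b.2) ^ (q + 1)) ^ q * (b.1 + s * b.2) ^ (q + 1) = 1 := by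
      rw [← pow_succ]; exact hBq1
    apply mul_right_cancel₀ (pow_ne_zero (q + 1) hB0)
    rw [h1]
    linear_combination -hCB1
  -- t is rational
  have e1 : t.1 ^ q - s * t.2 ^ q = t.1 - s * t.2 := by
    rw [← frobφ t, hφt, hTq, ← hψt]
  have e2 : t.1 ^ q + s * t.2 ^ q = t.1 + s * t.2 := by
    rw [← frobψ t, hψt, hTq', ← hφt]
  have hfix : ((t.1 ^ q, t.2 ^ q) : Ω × Ω) = t := point_ext hs0 two_ne e2 e1
  obtain ⟨y1t, hy1t⟩ := exists_rat t.1 (congrArg Prod.fst hfix)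
  obtain ⟨y2t, hy2t⟩ := exists_rat t.2 (congrArg Prod.snd hfix)
  have ht0norm : y1t ^ 2 - α * y2t ^ 2 = 1 := by
    apply (algebraMap K Ω).injective
    rw [map_sub, map_one, map_mul, map_pow, map_pow, hy1t, hy2t, ← hs]
    linear_combination hTprod
  have hφtpow : ∀ m : ℕ, (tpow (s ^ 2) m t).1 + s * (tpow (s ^ 2) m t).2
      = ((b.1 - s * b.2) ^ (q + 1)) ^ m := fun m => by rw [phi_tpow, hφt]
  have hψtpow : ∀ m : ℕ, (tpow (s ^ 2) m t).1 - s * (tpow (s ^ 2) m t).2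
      = ((b.1 + s * b.2) ^ (q + 1)) ^ m := fun m => by rw [psi_tpow, hψt]
  refine ⟨⟨(y1t, y2t), ht0norm, Prod.ext hy1t hy2t⟩, ⟨?_, ?_⟩, ?_⟩
  · -- tpow n t = (1,0)
    apply point_ext hs0 two_ne
    · rw [hφtpow n, (hTpow n).mpr dvd_rfl]; norm_num
    · rw [hψtpow n, (hTpow' n).mpr dvd_rfl]; norm_num
  · -- exact order n
    intro m hm0 hmn heq
    have h1 := hφtpow m
    rw [heq] at h1
    have h2 : ((b.1 - s * b.2) ^ (q + 1)) ^ m = 1 := by rw [← h1]; norm_num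
    have h3 := (hTpow m).mp h2
    exact absurd (Nat.le_of_dvd hm0 h3) (by omega)
  · -- the fiber
    haveI : NeZero n := ⟨by omega⟩
    have hTprim : IsPrimitiveRoot ((b.1 - s * b.2) ^ (q + 1)) n :=
      ⟨(hTpow n).mpr dvd_rfl, fun l hl => (hTpow l).mp hl⟩
    intro P
    constructor
    · rintro ⟨hPnorm, hPn⟩
      have hUV : (P.1 + s * P.2) * (P.1 - s * P.2) = 1 := by linear_combination hPnorm
      have hU0 : P.1 + s * P.2 ≠ 0 := left_ne_zero_of_mul_eq_one hUV
      have hUn : (P.1 + s * P.2) ^ n = algebraMap K Ω a.1 + s * algebraMap K Ω a.2 := by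
        rw [← phi_tpow s n P, hPn]
      have hw : ((P.1 + s * P.2) * (b.1 - s * b.2)) ^ n = 1 := by
        rw [mul_pow, hUn, hCn]; exact haΩ
      obtain ⟨k, hkn, hk⟩ := hTprim.eq_pow_of_pow_eq_one hw
      refine ⟨k, hkn, ?_⟩
      apply point_ext hs0 two_ne
      · rw [phi_tmul, hφtpow k, hk]
        linear_combination (-(P.1 + s * P.2)) * hBC
      · rw [psi_tmul, hψtpow k]
        apply mul_left_cancel₀ hU0
        rw [hUV]
        calc (1 : Ω) = ((b.1 - s * b.2) ^ (q + 1)) ^ k * ((b.1 + s * b.2) ^ (q + 1)) ^ k := by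
              rw [← mul_pow, hCB1, one_pow]
          _ = ((P.1 + s * P.2) * (b.1 - s * b.2)) * ((b.1 + s * b.2) ^ (q + 1)) ^ k := by
              rw [hk]
          _ = (P.1 + s * P.2) * ((b.1 - s * b.2) * ((b.1 + s * b.2) ^ (q + 1)) ^ k) := by ring
    · rintro ⟨k, hkn, rfl⟩
      have hφP : (tmul (s ^ 2) b (tpow (s ^ 2) k t)).1
          + s * (tmul (s ^ 2) b (tpow (s ^ 2) k t)).2
          = (b.1 + s * b.2) * ((b.1 - s * b.2) ^ (q + 1)) ^ k := by
        rw [phi_tmul, hφtpow k]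
      have hψP : (tmul (s ^ 2) b (tpow (s ^ 2) k t)).1
          - s * (tmul (s ^ 2) b (tpow (s ^ 2) k t)).2
          = (b.1 - s * b.2) * ((b.1 + s * b.2) ^ (q + 1)) ^ k := by
        rw [psi_tmul, hψtpow k]
      have hprod : ((b.1 + s * b.2) * ((b.1 - s * b.2) ^ (q + 1)) ^ k)
          * ((b.1 - s * b.2) * ((b.1 + s * b.2) ^ (q + 1)) ^ k) = 1 := by
        calc ((b.1 + s * b.2) * ((b.1 - s * b.2) ^ (q + 1)) ^ k)
            * ((b.1 - s * b.2) * ((b.1 + s * b.2) ^ (q + 1)) ^ k)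
            = ((b.1 + s * b.2) * (b.1 - s * b.2))
              * (((b.1 - s * b.2) ^ (q + 1)) * ((b.1 + s * b.2) ^ (q + 1))) ^ k := by
              rw [mul_pow]; ring
          _ = 1 := by rw [hBC, hCB1, one_pow, one_mul]
      constructor
      · have h1 := hprod
        rw [← hφP, ← hψP] at h1
        linear_combination h1
      · have hφn : ((b.1 + s * b.2) * ((b.1 - s * b.2) ^ (q + 1)) ^ k) ^ n
            = algebraMap K Ω a.1 + s * algebraMap K Ω a.2 := by
          rw [mul_pow, ← pow_mul, mul_comm k n, pow_mul, (hTpow n).mpr dvd_rfl, one_pow,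
            mul_one, hBn]
        have hψn : ((b.1 - s * b.2) * ((b.1 + s * b.2) ^ (q + 1)) ^ k) ^ n
            = algebraMap K Ω a.1 - s * algebraMap K Ω a.2 := by
          rw [mul_pow, ← pow_mul, mul_comm k n, pow_mul, (hTpow' n).mpr dvd_rfl, one_pow,
            mul_one, hCn]
        apply point_ext hs0 two_ne
        · rw [phi_tpow, hφP, hφn]
        · rw [psi_tpow, hψP, hψn]
end
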